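/- Let p ∈ (1, ∞). The expectation (Bochner integral) of the L^p(0,1)-valued random variable χ equals the function t ↦ 1 − t: the Bochner integral ∫_{(0,1)} χ(ω) dλ(ω), taken in the Banach space L^p(0,1), is the equivalence class in L^p(0,1) of the function E(χ)(t) = 1 − t. -/

import Mathlib

open MeasureTheory
open scoped ENNReal

/-- The restriction of Lebesgue measure to `(0,1)` gives finite measure to `(0,ω)`. -/
theorem chi_fin_aux (ω : ℝ) :
    (volume.restrict (Set.Ioo (0:ℝ) 1)) (Set.Ioo (0:ℝ) ω) ≠ ⊤ := by
  rw [Measure.restrict_apply measurableSet_Ioo]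
  exact ((measure_mono Set.inter_subset_right).trans_lt (by simp [Real.volume_Ioo])).ne

/-- `χ(ω) = 1_{(0,ω)}`, as an element of `L^p((0,1))`. -/
noncomputable def chi (p : ℝ) (ω : ℝ) :
    Lp ℝ (ENNReal.ofReal p) (volume.restrict (Set.Ioo (0:ℝ) 1)) :=
  indicatorConstLp (ENNReal.ofReal p) measurableSet_Ioo (chi_fin_aux ω) (1:ℝ)

namespace ChiAux

noncomputable abbrev μ01 : Measure ℝ := volume.restrict (Set.Ioo (0:ℝ) 1)

instance : IsProbabilityMeasure μ01 :=
  ⟨by simp [μ01, Real.volume_Ioo]⟩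

/-- Any `Lp` function (exponent `≥ 1`, probability measure) is integrable. -/
theorem integrable_Lp {q : ℝ≥0∞} [Fact (1 ≤ q)] (f : Lp ℝ q μ01) : Integrable f μ01 :=
  memLp_one_iff_integrable.mp ((Lp.memLp f).mono_exponent (Fact.out))

/-- The continuous linear map `f ↦ ∫ t in s, f t` on `Lp`. -/
noncomputable def setIntCLM (q : ℝ≥0∞) [Fact (1 ≤ q)] (s : Set ℝ) :
    Lp ℝ q μ01 →L[ℝ] ℝ :=
  LinearMap.mkContinuous
    { toFun := fun f => ∫ t in s, f t ∂μ01
      map_add' := fun f g => by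
        have h1 : ∫ t in s, (⇑(f + g)) t ∂μ01 = ∫ t in s, (f t + g t) ∂μ01 :=
          integral_congr_ae (ae_restrict_of_ae (Lp.coeFn_add f g))
        rw [h1, integral_add ((integrable_Lp f).integrableOn)
          ((integrable_Lp g).integrableOn)]
      map_smul' := fun c f => by
        have h1 : ∫ t in s, (⇑(c • f)) t ∂μ01 = ∫ t in s, c • f t ∂μ01 :=
          integral_congr_ae (ae_restrict_of_ae (Lp.coeFn_smul c f))
        rw [h1, integral_smul]
        rfl }
    1
    (by
      intro f
      rw [one_mul]
      calc ‖∫ t in s, f t ∂μ01‖ ≤ ∫ t in s, ‖f t‖ ∂μ01 := norm_integral_le_integral_norm _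
        _ ≤ ∫ t, ‖f t‖ ∂μ01 :=
            integral_mono_measure Measure.restrict_le_self
              (Filter.Eventually.of_forall fun _ => norm_nonneg _) (integrable_Lp f).norm
        _ = (eLpNorm f 1 μ01).toReal := by
            rw [integral_norm_eq_lintegral_enorm (Lp.aestronglyMeasurable f),
              eLpNorm_one_eq_lintegral_enorm]
        _ ≤ (eLpNorm f q μ01).toReal :=
            ENNReal.toReal_mono (Lp.eLpNorm_ne_top f)
              (eLpNorm_le_eLpNorm_of_exponent_le Fact.out (Lp.aestronglyMeasurable f))
        _ = ‖f‖ := (Lp.norm_def f).symm)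

@[simp] theorem setIntCLM_apply (q : ℝ≥0∞) [Fact (1 ≤ q)] (s : Set ℝ) (f : Lp ℝ q μ01) :
    setIntCLM q s f = ∫ t in s, f t ∂μ01 := rfl

theorem chi_continuous (p : ℝ) [Fact (1 ≤ ENNReal.ofReal p)] : Continuous (chi p) := by
  apply continuous_indicatorConstLp_set ENNReal.ofReal_ne_top
  intro x
  have hb : ∀ y : ℝ, μ01 (symmDiff (Set.Ioo (0:ℝ) y) (Set.Ioo (0:ℝ) x)) ≤ ENNReal.ofReal |y - x| := by
    intro y
    have hsub : symmDiff (Set.Ioo (0:ℝ) y) (Set.Ioo (0:ℝ) x) ⊆ Set.Icc (min x y) (max x y) := by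
      intro t ht
      rcases ht with ⟨⟨ht1, ht2⟩, ht3⟩ | ⟨⟨ht1, ht2⟩, ht3⟩
      · have hx : x ≤ t := by
          by_contra h
          exact ht3 ⟨ht1, lt_of_not_ge h⟩
        exact ⟨le_trans (min_le_left _ _) hx, le_trans ht2.le (le_max_right _ _)⟩
      · have hy : y ≤ t := by
          by_contra h
          exact ht3 ⟨ht1, lt_of_not_ge h⟩
        exact ⟨le_trans (min_le_right _ _) hy, le_trans ht2.le (le_max_left _ _)⟩
    calc μ01 (symmDiff (Set.Ioo (0:ℝ) y) (Set.Ioo (0:ℝ) x))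
        ≤ volume (Set.Icc (min x y) (max x y)) :=
          le_trans (le_trans (Measure.restrict_le_self _) (measure_mono hsub))
            le_rfl
      _ = ENNReal.ofReal (max x y - min x y) := Real.volume_Icc
      _ = ENNReal.ofReal |y - x| := by rw [max_sub_min_eq_abs', abs_sub_comm]
  have htend : Filter.Tendsto (fun y : ℝ => ENNReal.ofReal |y - x|) (nhds x) (nhds 0) := by
    have : Filter.Tendsto (fun y : ℝ => |y - x|) (nhds x) (nhds 0) := by
      have := ((continuous_id.sub (continuous_const (y := x))).abs).tendsto x
      simpa using this
    simpa [Function.comp_def] using (ENNReal.continuous_ofReal.tendsto 0).comp this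
  exact tendsto_of_tendsto_of_tendsto_of_le_of_le tendsto_const_nhds htend
    (fun y => (zero_le : (0:ℝ≥0∞) ≤ _)) hb

theorem chi_integrable (p : ℝ) [Fact (1 ≤ ENNReal.ofReal p)] : Integrable (chi p) μ01 := by
  refine ⟨(chi_continuous p).aestronglyMeasurable, ?_⟩
  apply HasFiniteIntegral.of_bounded (C := 1)
  refine Filter.Eventually.of_forall fun ω => ?_
  calc ‖chi p ω‖ ≤ ‖(1:ℝ)‖ * (μ01 (Set.Ioo (0:ℝ) ω)).toReal ^ (1 / (ENNReal.ofReal p).toReal) :=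
        norm_indicatorConstLp_le
    _ ≤ 1 := by
        rw [norm_one, one_mul]
        apply Real.rpow_le_one (ENNReal.toReal_nonneg)
        · exact ENNReal.toReal_le_of_le_ofReal zero_le_one
            (by simpa using prob_le_one (μ := μ01) (s := Set.Ioo (0:ℝ) ω))
        · positivity

end ChiAux

open ChiAux

/-- The expectation (Bochner integral) of the `L^p(0,1)`-valued
random variable `χ` is the (class of the) function `t ↦ 1 − t`: the Bochner integral
`∫_{(0,1)} χ(ω) dλ(ω)`, taken in the Banach space `L^p(0,1)`, is the equivalence
class in `L^p(0,1)` of `E(χ)(t) = 1 − t`. -/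
theorem expectation_chi (p : ℝ) (hp : 1 < p) [Fact (1 ≤ ENNReal.ofReal p)] :
    (((∫ ω in Set.Ioo (0:ℝ) 1, chi p ω) :
        Lp ℝ (ENNReal.ofReal p) (volume.restrict (Set.Ioo (0:ℝ) 1))) : ℝ → ℝ)
      =ᵐ[volume.restrict (Set.Ioo (0:ℝ) 1)] fun t => 1 - t := by
  set q := ENNReal.ofReal p with hq
  set F : Lp ℝ q μ01 := ∫ ω in Set.Ioo (0:ℝ) 1, chi p ω with hF
  have hgint : Integrable (fun t : ℝ => 1 - t) μ01 := by
    have : IntegrableOn (fun t : ℝ => 1 - t) (Set.Icc (0:ℝ) 1) volume :=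
      (continuous_const.sub continuous_id).integrableOn_Icc
    exact this.mono_set Set.Ioo_subset_Icc_self
  have hae : ∀ᵐ t ∂μ01, t ∈ Set.Ioo (0:ℝ) 1 := ae_restrict_mem measurableSet_Ioo
  apply ae_eq_of_forall_setIntegral_eq_of_sigmaFinite
  · exact fun s _ _ => (integrable_Lp F).integrableOn
  · exact fun s _ _ => hgint.integrableOn
  intro s hs hμs
  -- LHS via the continuous linear functional
  have hL : ∫ t in s, F t ∂μ01 = ∫ ω, (μ01 (Set.Ioo (0:ℝ) ω ∩ s)).toReal ∂μ01 := by
    have h1 : ∫ t in s, F t ∂μ01 = setIntCLM q s F := rfl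
    rw [h1, hF, ← ContinuousLinearMap.integral_comp_comm _ (chi_integrable p)]
    refine integral_congr_ae (Filter.Eventually.of_forall fun ω => ?_)
    show (setIntCLM q s) (chi p ω) = (μ01 (Set.Ioo (0:ℝ) ω ∩ s)).toReal
    rw [setIntCLM_apply]
    show ∫ t in s, (chi p ω) t ∂μ01 = _
    rw [chi, setIntegral_indicatorConstLp hs measurableSet_Ioo (chi_fin_aux ω) (1:ℝ),
      smul_eq_mul, mul_one, measureReal_def]
  -- Fubini computation
  have hmono : Monotone (fun ω : ℝ => μ01 (Set.Ioo (0:ℝ) ω ∩ s)) := by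
    intro a b hab
    exact measure_mono (Set.inter_subset_inter_left s (Set.Ioo_subset_Ioo le_rfl hab))
  have hlt : ∀ ω : ℝ, μ01 (Set.Ioo (0:ℝ) ω ∩ s) < ⊤ :=
    fun ω => lt_of_le_of_lt (measure_mono (Set.subset_univ _)) (measure_lt_top _ _)
  have hRL : ∫ ω, (μ01 (Set.Ioo (0:ℝ) ω ∩ s)).toReal ∂μ01 =
      (∫⁻ ω, μ01 (Set.Ioo (0:ℝ) ω ∩ s) ∂μ01).toReal :=
    integral_toReal hmono.measurable.aemeasurable
      (Filter.Eventually.of_forall hlt)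
  -- the key swap
  set A : Set (ℝ × ℝ) := {z : ℝ × ℝ | z.2 ∈ s ∧ z.2 < z.1} with hA
  have hAmeas : MeasurableSet A :=
    (hs.preimage measurable_snd).inter (measurableSet_lt measurable_snd measurable_fst)
  have hswap : ∫⁻ ω, μ01 (Set.Ioo (0:ℝ) ω ∩ s) ∂μ01 =
      ∫⁻ t, ∫⁻ ω, A.indicator (fun _ => (1:ℝ≥0∞)) (ω, t) ∂μ01 ∂μ01 := by
    rw [← lintegral_lintegral_swap]
    · refine lintegral_congr fun ω => ?_
      have hset : (fun t => A.indicator (fun _ => (1:ℝ≥0∞)) (ω, t)) =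
          (s ∩ Set.Iio ω).indicator (fun _ => (1:ℝ≥0∞)) := by
        ext t
        by_cases h : t ∈ s ∧ t < ω <;>
          simp [hA, Set.indicator_apply, Set.mem_setOf_eq, h]
      rw [hset, lintegral_indicator (hs.inter measurableSet_Iio), setLIntegral_one]
      rw [Measure.restrict_apply (measurableSet_Ioo.inter hs),
        Measure.restrict_apply (hs.inter measurableSet_Iio)]
      congr 1
      ext t
      simp only [Set.mem_inter_iff, Set.mem_Ioo, Set.mem_Iio]
      tauto
    · have hu : Function.uncurry (fun ω t : ℝ => A.indicator (fun _ => (1:ℝ≥0∞)) (ω, t)) =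
          A.indicator (fun _ => (1:ℝ≥0∞)) := rfl
      rw [hu]
      exact (measurable_const.indicator hAmeas).aemeasurable
  have hinner : ∀ t : ℝ, ∫⁻ ω, A.indicator (fun _ => (1:ℝ≥0∞)) (ω, t) ∂μ01 =
      s.indicator (fun t => μ01 (Set.Ioi t)) t := by
    intro t
    by_cases ht : t ∈ s
    · have hset : (fun ω => A.indicator (fun _ => (1:ℝ≥0∞)) (ω, t)) =
          (Set.Ioi t).indicator (fun _ => (1:ℝ≥0∞)) := by
        ext ω
        by_cases h : t < ω <;>
          simp [hA, Set.indicator_apply, Set.mem_setOf_eq, h, ht]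
      rw [hset, lintegral_indicator measurableSet_Ioi, setLIntegral_one,
        Set.indicator_of_mem ht]
    · have hset : (fun ω => A.indicator (fun _ => (1:ℝ≥0∞)) (ω, t)) = fun _ => 0 := by
        ext ω
        simp [hA, Set.indicator_apply, Set.mem_setOf_eq, ht]
      rw [hset, lintegral_zero, Set.indicator_of_notMem ht]
  have hIoi : ∀ᵐ t ∂μ01, μ01 (Set.Ioi t) = ENNReal.ofReal (1 - t) := by
    filter_upwards [hae] with t ht
    rw [Measure.restrict_apply measurableSet_Ioi]
    have : Set.Ioi t ∩ Set.Ioo (0:ℝ) 1 = Set.Ioo t 1 := by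
      ext x
      simp only [Set.mem_inter_iff, Set.mem_Ioi, Set.mem_Ioo]
      constructor
      · rintro ⟨h1, _, h3⟩; exact ⟨h1, h3⟩
      · rintro ⟨h1, h2⟩; exact ⟨h1, lt_trans ht.1 h1, h2⟩
    rw [this, Real.volume_Ioo]
  have hkey : ∫⁻ ω, μ01 (Set.Ioo (0:ℝ) ω ∩ s) ∂μ01 =
      ∫⁻ t in s, ENNReal.ofReal (1 - t) ∂μ01 := by
    rw [hswap]
    have h1 : ∫⁻ t, ∫⁻ ω, A.indicator (fun _ => (1:ℝ≥0∞)) (ω, t) ∂μ01 ∂μ01 =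
        ∫⁻ t, s.indicator (fun t => μ01 (Set.Ioi t)) t ∂μ01 :=
      lintegral_congr hinner
    rw [h1, lintegral_indicator hs]
    exact lintegral_congr_ae (ae_restrict_of_ae (hIoi.mono fun t ht => ht))
  -- RHS as a lintegral
  have hRHS : ∫ t in s, (1 - t) ∂μ01 = (∫⁻ t in s, ENNReal.ofReal (1 - t) ∂μ01).toReal := by
    rw [integral_eq_lintegral_of_nonneg_ae]
    · exact ae_restrict_of_ae (hae.mono fun t ht => by simp [sub_nonneg, ht.2.le])
    · exact ((continuous_const.sub continuous_id).aestronglyMeasurable).restrict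
  rw [hL, hRL, hkey, hRHS]
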